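/- arXiv:1503.00044 — 6 statements merged into one kernel-verified Lean document; each statement's English description precedes it below -/
import Mathlib

section
/- For every natural number k, the number of vertices labeled k+1 in the action graph A_{k+1} (equivalently, the number of vertices adjoined when building A_{k+1} from A_k, which also equals the number of edges adjoined) is the (k+1)st Catalan number C_{k+1}. -/
/-- Vertices of action graphs: the root (labeled 0), or a vertex created at some
step, recorded together with its label and the path (head and tail of the vertex
sequence) that created it. -/
inductive AGVert : Type
  | root : AGVert
  | node (lbl : ℕ) (head : AGVert) (tail : List AGVert) : AGVert

/-- The label of a vertex. -/
def AGVert.label : AGVert → ℕ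
  | .root => 0
  | .node l _ _ => l

/-- `IsPath E a l` says that `a :: l` is the vertex sequence of a directed path in a
graph with edge set `E` (the trivial path at `a` when `l = []`). -/
def IsPath (E : Set (AGVert × AGVert)) (a : AGVert) (l : List AGVert) : Prop :=
  List.Chain (fun x y => (x, y) ∈ E) a l

/-- The terminal vertex of the path with vertex sequence `a :: l`. -/
def pathLast (a : AGVert) (l : List AGVert) : AGVert :=
  (a :: l).getLast (List.cons_ne_nil a l)

/-- The action graph `A k`, given by its set of vertices together with its set of
(nontrivial, directed) edges.  `A 0` has one vertex (labeled 0) and no nontrivial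
edges; `A (k+1)` is obtained from `A k` by adjoining, for each directed path
(including trivial ones) in `A k` whose terminal vertex is labeled `k`, a new vertex
labeled `k+1` and a new edge from the initial vertex of the path to the new vertex. -/
def actionGraph : ℕ → Set AGVert × Set (AGVert × AGVert)
  | 0 => ({AGVert.root}, ∅)
  | k + 1 =>
    let G := actionGraph k
    (G.1 ∪ { w | ∃ a l, a ∈ G.1 ∧ IsPath G.2 a l ∧ (pathLast a l).label = k ∧
        w = AGVert.node (k + 1) a l },
     G.2 ∪ { e | ∃ a l, a ∈ G.1 ∧ IsPath G.2 a l ∧ (pathLast a l).label = k ∧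
        e = (a, AGVert.node (k + 1) a l) })

/-!
Every edge of `A k` joins a vertex to a vertex it created, so `A k` is a tree rooted at the
vertex labeled 0, and a path is determined by its terminal vertex and its length: the paths
ending at `v` correspond to the depths `0, …, depth v` of their initial vertex. Following, for a
vertex labeled `k`, the chain of paths that created it and recording the depth of each new vertex
gives a bijection between the vertices labeled `k` and the sequences `s₁, …, sₖ` with `s₁ = 1` and
`1 ≤ sᵢ₊₁ ≤ sᵢ + 1`. Splitting such a sequence at its last `1` as `a ++ 1 :: (b + 1)` shows that
these sequences satisfy the Catalan recursion. Finally, each new edge ends at the new vertex it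
created, so there are as many new edges as new vertices.
-/

open Finset

theorem List.append_cons_inj_of_notMem_right {α : Type*} {a c b d : List α} {x : α}
    (hb : x ∉ b) (hd : x ∉ d) : a ++ x :: b = c ++ x :: d ↔ a = c ∧ b = d := by
  constructor
  · simp only [List.append_eq_append_iff, List.cons_eq_append_iff, List.cons_eq_cons]
    rintro (⟨_, rfl, h⟩ | ⟨_, rfl, h⟩) <;> rcases h with h | ⟨_, rfl, rfl, rfl⟩ <;> simp_all
  · rintro ⟨rfl, rfl⟩
    rfl

/-- Sequences `s₁, …, sₖ` with `s₁ = 1` and `1 ≤ sᵢ₊₁ ≤ sᵢ + 1`. -/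
def depthSeqs : ℕ → Finset (List ℕ)
  | 0 => {[]}
  | k + 1 => (depthSeqs k).biUnion fun s => (Icc 1 (s.getLastD 0 + 1)).image (s ++ [·])

lemma mem_depthSeqs_zero {s : List ℕ} : s ∈ depthSeqs 0 ↔ s = [] := by
  simp [depthSeqs]

lemma mem_depthSeqs_succ {k : ℕ} {s : List ℕ} :
    s ∈ depthSeqs (k + 1) ↔
      ∃ t ∈ depthSeqs k, ∃ e, (1 ≤ e ∧ e ≤ t.getLastD 0 + 1) ∧ t ++ [e] = s := by
  simp [depthSeqs]

lemma length_of_mem_depthSeqs {k : ℕ} {s : List ℕ} (hs : s ∈ depthSeqs k) : s.length = k := by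
  induction k generalizing s with
  | zero => simp [mem_depthSeqs_zero.1 hs]
  | succ k ih =>
    obtain ⟨t, ht, e, -, rfl⟩ := mem_depthSeqs_succ.1 hs
    simp [ih ht]

lemma one_le_of_mem_depthSeqs {k : ℕ} {s : List ℕ} (hs : s ∈ depthSeqs k) {x : ℕ}
    (hx : x ∈ s) : 1 ≤ x := by
  induction k generalizing s with
  | zero => simp [mem_depthSeqs_zero.1 hs] at hx
  | succ k ih =>
    obtain ⟨t, ht, e, ⟨he, -⟩, rfl⟩ := mem_depthSeqs_succ.1 hs
    rcases List.mem_append.1 hx with hx | hx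
    · exact ih ht hx
    · rwa [List.mem_singleton.1 hx]

/-- Every depth sequence splits uniquely at its last `1` as `glue a b`. -/
def glue (a b : List ℕ) : List ℕ := a ++ 1 :: b.map (· + 1)

lemma glue_concat (a b : List ℕ) (e : ℕ) : glue a (b ++ [e]) = glue a b ++ [e + 1] := by
  simp [glue]

lemma getLastD_glue (a b : List ℕ) : (glue a b).getLastD 0 = b.getLastD 0 + 1 := by
  rcases b.eq_nil_or_concat' with rfl | ⟨b, e, rfl⟩
  · simp [glue]
  · simp [glue_concat]

lemma glue_mem_depthSeqs {i j : ℕ} {a b : List ℕ} (ha : a ∈ depthSeqs i) (hb : b ∈ depthSeqs j) :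
    glue a b ∈ depthSeqs (i + j + 1) := by
  induction j generalizing b with
  | zero =>
    exact mem_depthSeqs_succ.2 ⟨a, ha, 1, by simp, by simp [mem_depthSeqs_zero.1 hb, glue]⟩
  | succ j ih =>
    obtain ⟨t, ht, e, ⟨he₁, he₂⟩, rfl⟩ := mem_depthSeqs_succ.1 hb
    refine mem_depthSeqs_succ.2 ⟨glue a t, ih ht, e + 1, ?_, (glue_concat a t e).symm⟩
    rw [getLastD_glue]
    omega

lemma exists_glue_eq {k : ℕ} {s : List ℕ} (hs : s ∈ depthSeqs (k + 1)) :
    ∃ ij ∈ antidiagonal k, ∃ a ∈ depthSeqs ij.1, ∃ b ∈ depthSeqs ij.2, glue a b = s := by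
  induction k generalizing s with
  | zero =>
    obtain ⟨t, ht, e, he, rfl⟩ := mem_depthSeqs_succ.1 hs
    obtain rfl := mem_depthSeqs_zero.1 ht
    obtain rfl : e = 1 := by simp at he; omega
    exact ⟨(0, 0), by simp, [], ht, [], ht, rfl⟩
  | succ k ih =>
    obtain ⟨t, ht, e, ⟨he₁, he₂⟩, rfl⟩ := mem_depthSeqs_succ.1 hs
    rcases he₁.eq_or_lt with rfl | he₁
    · exact ⟨(k + 1, 0), by simp, t, ht, [], mem_depthSeqs_zero.2 rfl, rfl⟩
    obtain ⟨⟨i, j⟩, hij, a, ha, b, hb, rfl⟩ := ih ht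
    rw [getLastD_glue] at he₂
    refine ⟨(i, j + 1), ?_, a, ha, b ++ [e - 1], mem_depthSeqs_succ.2 ⟨b, hb, e - 1, ?_, rfl⟩, ?_⟩
    · rw [HasAntidiagonal.mem_antidiagonal] at hij ⊢
      omega
    · omega
    · rw [glue_concat, Nat.sub_add_cancel he₁.le]

lemma glue_inj {j j' : ℕ} {a b c d : List ℕ} (hb : b ∈ depthSeqs j) (hd : d ∈ depthSeqs j') :
    glue a b = glue c d ↔ a = c ∧ b = d := by
  have one_notMem {j b} (hb : b ∈ depthSeqs j) : 1 ∉ b.map (· + 1) := by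
    simp only [List.mem_map, not_exists, not_and]
    intro x hx
    have := one_le_of_mem_depthSeqs hb hx
    omega
  rw [glue, glue, List.append_cons_inj_of_notMem_right (one_notMem hb) (one_notMem hd),
    List.map_inj_right fun _ _ => Nat.succ.inj]

lemma card_depthSeqs_succ (k : ℕ) :
    #(depthSeqs (k + 1)) = ∑ ij ∈ antidiagonal k, #(depthSeqs ij.1) * #(depthSeqs ij.2) := by
  simp_rw [← card_product, ← card_sigma]
  symm
  refine card_nbij (fun p => glue p.2.1 p.2.2) ?_ ?_ ?_
  · rintro ⟨⟨i, j⟩, a, b⟩ hp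
    simp only [coe_sigma, Set.mem_sigma_iff, mem_coe, HasAntidiagonal.mem_antidiagonal,
      mem_product] at hp
    obtain ⟨rfl, ha, hb⟩ := hp
    exact glue_mem_depthSeqs ha hb
  · rintro ⟨⟨i, j⟩, a, b⟩ hp ⟨⟨i', j'⟩, a', b'⟩ hp' h
    simp only [coe_sigma, Set.mem_sigma_iff, mem_coe, HasAntidiagonal.mem_antidiagonal,
      mem_product] at hp hp'
    obtain ⟨rfl, rfl⟩ := (glue_inj hp.2.2 hp'.2.2).1 h
    rw [← length_of_mem_depthSeqs hp.2.1, ← length_of_mem_depthSeqs hp'.2.1,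
      ← length_of_mem_depthSeqs hp.2.2, ← length_of_mem_depthSeqs hp'.2.2]
  · intro s hs
    obtain ⟨ij, hij, a, ha, b, hb, rfl⟩ := exists_glue_eq hs
    exact ⟨⟨ij, a, b⟩, by simp [hij, ha, hb], rfl⟩

theorem card_depthSeqs (k : ℕ) : #(depthSeqs k) = catalan k := by
  induction k using Nat.strong_induction_on with
  | _ k ih =>
    rcases k with _ | k
    · simp [depthSeqs]
    · rw [card_depthSeqs_succ, catalan_succ']
      refine sum_congr rfl fun ij hij => ?_
      rw [ih _ (Nat.antidiagonal.fst_lt hij), ih _ (Nat.antidiagonal.snd_lt hij)]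

namespace AGVert

def depth : AGVert → ℕ
  | root => 0
  | node _ a _ => a.depth + 1

/-- `[v₁.depth, …, vₖ.depth]` where `vₖ = v` and `vᵢ` is the terminal vertex of the path that
created `vᵢ₊₁`. -/
def depthSeq : AGVert → List ℕ
  | root => []
  | node _ a l => (pathLast a l).depthSeq ++ [a.depth + 1]
termination_by v => sizeOf v
decreasing_by
  have := List.sizeOf_lt_of_mem (List.getLast_mem (List.cons_ne_nil a l))
  simp only [pathLast, List.cons.sizeOf_spec, node.sizeOf_spec] at this ⊢
  omega

lemma depthSeq_node (j : ℕ) (a : AGVert) (l : List AGVert) :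
    (node j a l).depthSeq = (pathLast a l).depthSeq ++ [a.depth + 1] :=
  depthSeq.eq_2 j a l

lemma getLastD_depthSeq (v : AGVert) : v.depthSeq.getLastD 0 = v.depth := by
  cases v with
  | root => rw [depthSeq.eq_1]; rfl
  | node j a l => rw [depthSeq_node, List.getLastD_concat]; rfl

end AGVert

lemma pathLast_concat (a y : AGVert) (l : List AGVert) : pathLast a (l ++ [y]) = y := by
  simp [pathLast]

lemma isPath_iff_isChain {S : Set (AGVert × AGVert)} {a : AGVert} {l : List AGVert} :
    IsPath S a l ↔ (a :: l).IsChain (fun x y => (x, y) ∈ S) := Iff.rfl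

lemma isPath_concat {S : Set (AGVert × AGVert)} {a y : AGVert} {l : List AGVert} :
    IsPath S a (l ++ [y]) ↔ IsPath S a l ∧ (pathLast a l, y) ∈ S := by
  rw [isPath_iff_isChain, isPath_iff_isChain, ← List.cons_append, List.isChain_append]
  simp [pathLast, List.getLast?_eq_some_getLast]

namespace ActionGraph

open Set AGVert

abbrev verts (k : ℕ) : Set AGVert := (actionGraph k).1

abbrev edges (k : ℕ) : Set (AGVert × AGVert) := (actionGraph k).2

def layer (k : ℕ) : Set AGVert := {v | v ∈ verts k ∧ v.label = k}

lemma mem_verts_zero {v : AGVert} : v ∈ verts 0 ↔ v = .root := Iff.rfl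

lemma notMem_edges_zero (e : AGVert × AGVert) : e ∉ edges 0 := id

lemma mem_verts_succ {k : ℕ} {v : AGVert} :
    v ∈ verts (k + 1) ↔ v ∈ verts k ∨ ∃ a l, a ∈ verts k ∧ IsPath (edges k) a l ∧
      (pathLast a l).label = k ∧ v = .node (k + 1) a l := Iff.rfl

lemma mem_edges_succ {k : ℕ} {e : AGVert × AGVert} :
    e ∈ edges (k + 1) ↔ e ∈ edges k ∨ ∃ a l, a ∈ verts k ∧ IsPath (edges k) a l ∧
      (pathLast a l).label = k ∧ e = (a, .node (k + 1) a l) := Iff.rfl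

lemma label_le_of_mem_verts {k : ℕ} {v : AGVert} (hv : v ∈ verts k) : v.label ≤ k := by
  induction k with
  | zero => simp [mem_verts_zero.1 hv, AGVert.label]
  | succ k ih =>
    rcases mem_verts_succ.1 hv with hv | ⟨a, l, -, -, -, rfl⟩
    · exact (ih hv).trans k.le_succ
    · exact le_rfl

lemma mem_edges_iff {k : ℕ} {x y : AGVert} :
    (x, y) ∈ edges k ↔ y ∈ verts k ∧ ∃ j l, y = .node j x l := by
  induction k with
  | zero =>
    simp only [notMem_edges_zero, mem_verts_zero, false_iff, not_and]
    rintro rfl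
    simp
  | succ k ih =>
    constructor
    · rintro (h | ⟨a, l, ha, hl, hlab, he⟩)
      · exact ⟨.inl (ih.1 h).1, (ih.1 h).2⟩
      · obtain ⟨rfl, rfl⟩ := Prod.mk.inj he
        exact ⟨.inr ⟨x, l, ha, hl, hlab, rfl⟩, k + 1, l, rfl⟩
    · rintro ⟨hy | ⟨a, l, ha, hl, hlab, rfl⟩, j, t, hxy⟩
      · exact .inl (ih.2 ⟨hy, j, t, hxy⟩)
      · obtain ⟨rfl, rfl, rfl⟩ := AGVert.node.inj hxy
        exact .inr ⟨a, l, ha, hl, hlab, rfl⟩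

lemma fst_mem_verts_of_mem_edges {k : ℕ} {x y : AGVert} (h : (x, y) ∈ edges k) :
    x ∈ verts k := by
  induction k with
  | zero => exact absurd h (notMem_edges_zero _)
  | succ k ih =>
    rcases mem_edges_succ.1 h with h | ⟨a, l, ha, -, -, he⟩
    · exact .inl (ih h)
    · exact .inl ((Prod.mk.inj he).1 ▸ ha)

lemma fst_eq_of_mem_edges {k : ℕ} {x x' y : AGVert} (h : (x, y) ∈ edges k)
    (h' : (x', y) ∈ edges k) : x = x' := by
  obtain ⟨-, j, l, rfl⟩ := mem_edges_iff.1 h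
  obtain ⟨-, _, _, hy⟩ := mem_edges_iff.1 h'
  exact (AGVert.node.inj hy).2.1

lemma depth_snd_of_mem_edges {k : ℕ} {x y : AGVert} (h : (x, y) ∈ edges k) :
    y.depth = x.depth + 1 := by
  obtain ⟨-, j, l, rfl⟩ := mem_edges_iff.1 h
  rfl

lemma pathLast_mem_verts {k : ℕ} {a : AGVert} {l : List AGVert} (ha : a ∈ verts k)
    (hl : IsPath (edges k) a l) : pathLast a l ∈ verts k := by
  rcases l.eq_nil_or_concat' with rfl | ⟨l, y, rfl⟩
  · exact ha
  · rw [pathLast_concat]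
    exact (mem_edges_iff.1 (isPath_concat.1 hl).2).1

lemma depth_pathLast {k : ℕ} {a : AGVert} {l : List AGVert} (hl : IsPath (edges k) a l) :
    (pathLast a l).depth = a.depth + l.length := by
  induction l using List.reverseRecOn with
  | nil => rfl
  | append_singleton l y ih =>
    obtain ⟨hl, hy⟩ := isPath_concat.1 hl
    rw [pathLast_concat, depth_snd_of_mem_edges hy, ih hl, List.length_append,
      List.length_singleton, Nat.add_assoc]

lemma isPath_unique {k : ℕ} {a a' : AGVert} {l l' : List AGVert} (hl : IsPath (edges k) a l)
    (hl' : IsPath (edges k) a' l') (hlast : pathLast a l = pathLast a' l')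
    (hlen : l.length = l'.length) : a = a' ∧ l = l' := by
  induction l using List.reverseRecOn generalizing l' with
  | nil =>
    obtain rfl := List.length_eq_zero_iff.1 hlen.symm
    exact ⟨hlast, rfl⟩
  | append_singleton l y ih =>
    obtain ⟨l', y', rfl⟩ := l'.eq_nil_or_concat'.resolve_left (by rintro rfl; simp at hlen)
    rw [pathLast_concat, pathLast_concat] at hlast
    subst hlast
    obtain ⟨hl, hy⟩ := isPath_concat.1 hl
    obtain ⟨hl', hy'⟩ := isPath_concat.1 hl'
    obtain ⟨rfl, rfl⟩ := ih hl hl' (fst_eq_of_mem_edges hy hy') (by simpa using hlen)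
    exact ⟨rfl, rfl⟩

lemma exists_isPath_of_le_depth {k : ℕ} {v : AGVert} (hv : v ∈ verts k) {m : ℕ}
    (hm : m ≤ v.depth) :
    ∃ a l, a ∈ verts k ∧ IsPath (edges k) a l ∧ pathLast a l = v ∧ l.length = m := by
  induction m generalizing v with
  | zero => exact ⟨v, [], hv, isPath_iff_isChain.2 (.singleton v), rfl, rfl⟩
  | succ m ih =>
    obtain ⟨j, x, t, rfl⟩ : ∃ j x t, v = .node j x t := by
      cases v with
      | root => simp [AGVert.depth] at hm
      | node j x t => exact ⟨j, x, t, rfl⟩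
    have hx : (x, .node j x t) ∈ edges k := mem_edges_iff.2 ⟨hv, j, t, rfl⟩
    obtain ⟨a, l, ha, hl, rfl, rfl⟩ :=
      ih (fst_mem_verts_of_mem_edges hx) (by simp [AGVert.depth] at hm; omega)
    exact ⟨a, l ++ [.node j (pathLast a l) t], ha, isPath_concat.2 ⟨hl, hx⟩, pathLast_concat ..,
      by simp⟩

end ActionGraph


namespace ActionGraph

open Set AGVert

lemma mem_layer_succ {k : ℕ} {v : AGVert} :
    v ∈ layer (k + 1) ↔ ∃ a l, a ∈ verts k ∧ IsPath (edges k) a l ∧ pathLast a l ∈ layer k ∧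
      v = .node (k + 1) a l := by
  constructor
  · rintro ⟨hv | ⟨a, l, ha, hl, hlab, rfl⟩, hlab'⟩
    · have := label_le_of_mem_verts hv
      omega
    · exact ⟨a, l, ha, hl, ⟨pathLast_mem_verts ha hl, hlab⟩, rfl⟩
  · rintro ⟨a, l, ha, hl, ⟨-, hlab⟩, rfl⟩
    exact ⟨.inr ⟨a, l, ha, hl, hlab, rfl⟩, rfl⟩

lemma mapsTo_depthSeq_layer_succ {k : ℕ} (h : MapsTo depthSeq (layer k) (depthSeqs k)) :
    MapsTo depthSeq (layer (k + 1)) (depthSeqs (k + 1)) := by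
  intro v hv
  obtain ⟨a, l, -, hl, hu, rfl⟩ := mem_layer_succ.1 hv
  refine mem_depthSeqs_succ.2 ⟨_, h hu, a.depth + 1, ?_, (depthSeq_node ..).symm⟩
  rw [getLastD_depthSeq, depth_pathLast hl]
  omega

lemma injOn_depthSeq_layer_succ {k : ℕ} (h : InjOn depthSeq (layer k)) :
    InjOn depthSeq (layer (k + 1)) := by
  intro v hv v' hv' hvv'
  obtain ⟨a, l, -, hl, hu, rfl⟩ := mem_layer_succ.1 hv
  obtain ⟨a', l', -, hl', hu', rfl⟩ := mem_layer_succ.1 hv'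
  rw [depthSeq_node, depthSeq_node] at hvv'
  obtain ⟨hseq, hdepth⟩ := List.append_inj' hvv' rfl
  have hlast := h hu hu' hseq
  have hlen : l.length = l'.length := by
    have h₁ := depth_pathLast hl
    have h₂ := depth_pathLast hl'
    rw [hlast] at h₁
    simp only [List.cons.injEq, add_left_inj, and_true] at hdepth
    omega
  obtain ⟨rfl, rfl⟩ := isPath_unique hl hl' hlast hlen
  rfl

lemma surjOn_depthSeq_layer_succ {k : ℕ} (h : SurjOn depthSeq (layer k) (depthSeqs k)) :
    SurjOn depthSeq (layer (k + 1)) (depthSeqs (k + 1)) := by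
  intro s hs
  obtain ⟨t, ht, e, ⟨he₁, he₂⟩, rfl⟩ := mem_depthSeqs_succ.1 hs
  obtain ⟨u, hu, rfl⟩ := h ht
  rw [getLastD_depthSeq] at he₂
  obtain ⟨a, l, ha, hl, rfl, hlen⟩ :=
    exists_isPath_of_le_depth hu.1 (m := u.depth + 1 - e) (by omega)
  refine ⟨.node (k + 1) a l, mem_layer_succ.2 ⟨a, l, ha, hl, hu, rfl⟩, ?_⟩
  have := depth_pathLast hl
  rw [depthSeq_node]
  congr 2
  omega

theorem bijOn_depthSeq_layer (k : ℕ) : BijOn depthSeq (layer k) (depthSeqs k) := by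
  induction k with
  | zero =>
    have : layer 0 = {root} := by
      ext v
      simp only [layer, mem_ofPred_eq, mem_verts_zero, mem_singleton_iff, and_iff_left_iff_imp]
      rintro rfl
      rfl
    rw [this, depthSeqs, Finset.coe_singleton, bijOn_singleton, depthSeq.eq_1]
  | succ k ih =>
    exact ⟨mapsTo_depthSeq_layer_succ ih.1, injOn_depthSeq_layer_succ ih.2.1,
      surjOn_depthSeq_layer_succ ih.2.2⟩

theorem ncard_layer (k : ℕ) : (layer k).ncard = catalan k := by
  rw [(bijOn_depthSeq_layer k).ncard_eq, ncard_coe_finset, card_depthSeqs]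

lemma bijOn_snd_edges_diff (k : ℕ) :
    BijOn Prod.snd (edges (k + 1) \ edges k) (layer (k + 1)) := by
  refine ⟨?_, ?_, ?_⟩
  · rintro _ ⟨h | ⟨a, l, ha, hl, hlab, rfl⟩, hnew⟩
    · exact absurd h hnew
    · exact ⟨.inr ⟨a, l, ha, hl, hlab, rfl⟩, rfl⟩
  · rintro ⟨x, y⟩ ⟨h, -⟩ ⟨x', y'⟩ ⟨h', -⟩ (rfl : y = y')
    rw [fst_eq_of_mem_edges h h']
  · intro v hv
    obtain ⟨a, l, ha, hl, hu, rfl⟩ := mem_layer_succ.1 hv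
    refine ⟨(a, .node (k + 1) a l), ⟨.inr ⟨a, l, ha, hl, hu.2, rfl⟩, fun h => ?_⟩, rfl⟩
    have := label_le_of_mem_verts (mem_edges_iff.1 h).1
    simp [AGVert.label] at this

end ActionGraph

/-- When building `A (k+1)` from `A k`, the number of vertices added and labeled `k+1`,
and likewise the number of edges added, is the `(k+1)`st Catalan number. -/
theorem stmt_0 (k : ℕ) :
    {v : AGVert | v ∈ (actionGraph (k + 1)).1 ∧ v.label = k + 1}.ncard = catalan (k + 1) ∧
    {e : AGVert × AGVert | e ∈ (actionGraph (k + 1)).2 ∧ e ∉ (actionGraph k).2}.ncard =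
      catalan (k + 1) :=
  ⟨ActionGraph.ncard_layer (k + 1),
    (ActionGraph.bijOn_snd_edges_diff k).ncard_eq.trans (ActionGraph.ncard_layer (k + 1))⟩
end

section
/- For every natural number k and every vertex v of the action graph A_k, there is exactly one directed path in A_k from the vertex labeled 0 to v. -/
/-!
Every edge of `A k` has the form `(a, node j a l)`: the source of an edge is recorded in its
target. So each vertex has at most one in-neighbour and the root has none, whence a path ending
at `v` can be retraced backwards from `v` in only one way; and it must start at the root, the
only vertex labeled `0`. Existence is by induction on `k`: a new vertex `node (k + 1) a l` is
reached through the new edge from `a`, which is reachable in `A k`.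
-/

theorem List.IsChain.eq_of_getLast_eq {α : Type*} {R : α → α → Prop} {r : α}
    (hR : Relator.LeftUnique R) (hr : ∀ x, ¬ R x r) {l l' : List α}
    (hl : IsChain R (r :: l)) (hl' : IsChain R (r :: l'))
    (h : (r :: l).getLast (cons_ne_nil r l) = (r :: l').getLast (cons_ne_nil r l')) :
    l = l' := by
  have last_rel {m x} (hm : IsChain R (r :: (m ++ [x]))) :
      R ((r :: m).getLast (cons_ne_nil r m)) x :=
    hm.rel_getLast_head_of_append (l₁ := r :: m) (l₂ := [x]) (cons_ne_nil r m) (cons_ne_nil x [])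
  induction l using List.reverseRecOn generalizing l' with
  | nil =>
    rcases l'.eq_nil_or_concat' with rfl | ⟨m', x', rfl⟩
    · rfl
    · simp only [getLast_singleton, ← cons_append, getLast_concat] at h
      subst h
      exact (hr _ (last_rel hl')).elim
  | append_singleton m x ih =>
    rcases l'.eq_nil_or_concat' with rfl | ⟨m', x', rfl⟩
    · simp only [getLast_singleton, ← cons_append, getLast_concat] at h
      subst h
      exact (hr _ (last_rel hl)).elim
    · simp only [← cons_append, getLast_concat] at h
      subst h
      rw [ih (hl.left_of_append (l₂ := [x])) (hl'.left_of_append (l₂ := [x]))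
        (hR (last_rel hl) (last_rel hl'))]

theorem root_mem_actionGraph (k : ℕ) : AGVert.root ∈ (actionGraph k).1 := by
  induction k with
  | zero => rfl
  | succ k ih => exact Or.inl ih

theorem eq_root_of_mem_actionGraph_of_label_eq_zero {k : ℕ} {v : AGVert}
    (hv : v ∈ (actionGraph k).1) (hlabel : v.label = 0) : v = AGVert.root := by
  induction k with
  | zero => exact hv
  | succ k ih =>
    rcases hv with hv | ⟨a, l, -, -, -, rfl⟩
    · exact ih hv
    · simp [AGVert.label] at hlabel

theorem eq_node_of_mem_actionGraph_edges {k : ℕ} {x y : AGVert}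
    (h : (x, y) ∈ (actionGraph k).2) : ∃ j l, y = AGVert.node j x l := by
  induction k with
  | zero => exact absurd h (Set.notMem_empty _)
  | succ k ih =>
    rcases h with h | ⟨a, l, -, -, -, he⟩
    · exact ih h
    · obtain ⟨rfl, rfl⟩ := Prod.mk.inj he
      exact ⟨k + 1, l, rfl⟩

theorem leftUnique_actionGraph_edges (k : ℕ) :
    Relator.LeftUnique fun x y => (x, y) ∈ (actionGraph k).2 := by
  intro x x' y h h'
  obtain ⟨j, l, rfl⟩ := eq_node_of_mem_actionGraph_edges h
  obtain ⟨j', l', he⟩ := eq_node_of_mem_actionGraph_edges h'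
  exact (AGVert.node.inj he).2.1

theorem root_notMem_actionGraph_edges (k : ℕ) (x : AGVert) :
    (x, AGVert.root) ∉ (actionGraph k).2 := fun h => by
  obtain ⟨j, l, h⟩ := eq_node_of_mem_actionGraph_edges h
  exact AGVert.noConfusion h

theorem reflTransGen_root_of_mem_actionGraph {k : ℕ} {v : AGVert}
    (hv : v ∈ (actionGraph k).1) :
    Relation.ReflTransGen (fun x y => (x, y) ∈ (actionGraph k).2) AGVert.root v := by
  induction k generalizing v with
  | zero => rw [hv]
  | succ k ih =>
    have hmono {w} (hw : w ∈ (actionGraph k).1) :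
        Relation.ReflTransGen (fun x y => (x, y) ∈ (actionGraph (k + 1)).2) AGVert.root w :=
      Relation.ReflTransGen.mono (fun _ _ => Or.inl) _ _ (ih hw)
    rcases hv with hv | ⟨a, l, ha, hp, hlabel, rfl⟩
    · exact hmono hv
    · exact (hmono ha).tail (Or.inr ⟨a, l, ha, hp, hlabel, rfl⟩)

/-- For every vertex `v` of `A k` there is exactly one directed path in `A k` from the
vertex labeled 0 to `v`. -/
theorem stmt_3 (k : ℕ) (v : AGVert) (hv : v ∈ (actionGraph k).1) :
    ∃! p : AGVert × List AGVert, p.1 ∈ (actionGraph k).1 ∧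
      IsPath (actionGraph k).2 p.1 p.2 ∧ p.1.label = 0 ∧ pathLast p.1 p.2 = v := by
  obtain ⟨l, hl, hlast⟩ :=
    List.exists_isChain_cons_of_relationReflTransGen (reflTransGen_root_of_mem_actionGraph hv)
  refine ⟨(AGVert.root, l), ⟨root_mem_actionGraph k, hl, rfl, hlast⟩, ?_⟩
  rintro ⟨a, l'⟩ ⟨ha, hl', hlabel, hlast'⟩
  obtain rfl := eq_root_of_mem_actionGraph_of_label_eq_zero ha hlabel
  have : l' = l := hl'.eq_of_getLast_eq (leftUnique_actionGraph_edges k)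
    (root_notMem_actionGraph_edges k) hl (hlast'.trans hlast.symm)
  rw [this]
end

section
/- For every natural number k, the total number of directed paths in the action graph A_k whose terminal vertex is labeled k (counting, for each vertex labeled k, the trivial path at that vertex) equals the (k+1)st Catalan number C_{k+1}. -/
/-!
A path of `A (k + 1)` ending at label `k + 1` is either the trivial path at a new vertex, or its
last edge is a new edge `(a, w)`, where `w` was created by a path `a :: l` of `A k` ending at
label `k`; replacing that edge by `l` gives a path of `A k` ending at label `k` together with a
split point. So every such path of `A k` with `L` edges yields exactly one such path of `A (k + 1)`
of each length `0, 1, …, L + 1`. The numbers of such paths of `A (n + m)` with at least `n` edges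
then obey the recursion of Catalan's triangle, which `ballot m n` also obeys, and the theorem
reduces to `ballot m 0 = C (m + 1)`, proved together with the convolution
`ballot m (n + 1) = ∑_{i + j = m} C i * ballot j n`.
-/

open Finset

section Paths

variable {E E' : Set (AGVert × AGVert)}

@[simp] lemma pathLast_nil (a : AGVert) : pathLast a [] = a := rfl

@[simp] lemma pathLast_cons (a b : AGVert) (l : List AGVert) :
    pathLast a (b :: l) = pathLast b l := by
  simp [pathLast]

lemma pathLast_append (a : AGVert) (l₁ l₂ : List AGVert) :
    pathLast a (l₁ ++ l₂) = pathLast (pathLast a l₁) l₂ := by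
  induction l₁ generalizing a with
  | nil => rfl
  | cons b l₁ ih => simp [ih]

@[simp] lemma pathLast_append_singleton (a v : AGVert) (l : List AGVert) :
    pathLast a (l ++ [v]) = v := by
  rw [pathLast_append]; rfl

@[simp] lemma isPath_nil (a : AGVert) : IsPath E a [] := List.IsChain.singleton a

@[simp] lemma isPath_cons {a b : AGVert} {l : List AGVert} :
    IsPath E a (b :: l) ↔ (a, b) ∈ E ∧ IsPath E b l :=
  List.isChain_cons_cons

lemma isPath_append {a : AGVert} {l₁ l₂ : List AGVert} :
    IsPath E a (l₁ ++ l₂) ↔ IsPath E a l₁ ∧ IsPath E (pathLast a l₁) l₂ := by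
  induction l₁ generalizing a with
  | nil => simp
  | cons b l₁ ih => simp [ih, and_assoc]

lemma isPath_append_singleton {a v : AGVert} {l : List AGVert} :
    IsPath E a (l ++ [v]) ↔ IsPath E a l ∧ (pathLast a l, v) ∈ E := by
  simp [isPath_append]

lemma IsPath.mono (hE : E ⊆ E') {a : AGVert} {l : List AGVert} (h : IsPath E a l) :
    IsPath E' a l :=
  List.IsChain.imp (fun _ _ hab => hE hab) h

end Paths

/-- `ballot m n` counts the sequences `n = l₀, l₁, …, lₘ` of naturals with `lᵢ₊₁ ≤ lᵢ + 1`;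
these are the entries of Catalan's triangle. -/
def ballot : ℕ → ℕ → ℕ
  | 0, _ => 1
  | m + 1, n => ∑ j ∈ range (n + 2), ballot m j

@[simp] lemma ballot_zero_left (n : ℕ) : ballot 0 n = 1 := rfl

lemma ballot_succ (m n : ℕ) : ballot (m + 1) n = ∑ j ∈ range (n + 2), ballot m j := rfl

lemma ballot_succ_zero (m : ℕ) : ballot (m + 1) 0 = ballot m 0 + ballot m 1 := by
  simp [ballot_succ, sum_range_succ]

lemma ballot_succ_succ (m n : ℕ) :
    ballot (m + 1) (n + 1) = ballot (m + 1) n + ballot m (n + 2) := by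
  rw [ballot_succ, ballot_succ, sum_range_succ]

theorem ballot_zero_right_and_ballot_succ_right (m : ℕ) : ballot m 0 = catalan (m + 1) ∧
    ∀ n, ballot m (n + 1) = ∑ ij ∈ antidiagonal m, catalan ij.1 * ballot ij.2 n := by
  induction m using Nat.strong_induction_on with
  | _ m ih =>
  match m with
  | 0 => simp [catalan_one]
  | m + 1 =>
    obtain ⟨h₀, h⟩ := ih m m.lt_succ_self
    constructor
    · rw [ballot_succ_zero, h, catalan_succ' (m + 1), Nat.sum_antidiagonal_succ', h₀]
      simp only [catalan_zero, mul_one]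
      congr 1
      refine sum_congr rfl fun ij hij => ?_
      rw [(ih ij.2 (by have := mem_antidiagonal.mp hij; omega)).1]
    · intro n
      rw [Nat.sum_antidiagonal_succ', ballot_succ, sum_range_succ', h₀]
      simp only [h, ballot_zero_left, mul_one]
      rw [sum_comm, add_comm]
      simp only [← mul_sum, ballot_succ]

theorem ballot_zero_right (m : ℕ) : ballot m 0 = catalan (m + 1) :=
  (ballot_zero_right_and_ballot_succ_right m).1

def newVertex (k : ℕ) (p : AGVert × List AGVert) : AGVert := .node (k + 1) p.1 p.2

@[simp] lemma label_root : AGVert.root.label = 0 := rfl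

@[simp] lemma label_newVertex (k : ℕ) (p : AGVert × List AGVert) :
    (newVertex k p).label = k + 1 := rfl

lemma newVertex_injective (k : ℕ) : Function.Injective (newVertex k) := by
  rintro ⟨a, l⟩ ⟨a', l'⟩ h
  simp_all [newVertex]

def topPaths (k : ℕ) : Set (AGVert × List AGVert) :=
  {p | p.1 ∈ (actionGraph k).1 ∧ IsPath (actionGraph k).2 p.1 p.2 ∧ (pathLast p.1 p.2).label = k}

section ActionGraph

variable {k : ℕ}

lemma mem_topPaths {a : AGVert} {l : List AGVert} :
    (a, l) ∈ topPaths k ↔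
      a ∈ (actionGraph k).1 ∧ IsPath (actionGraph k).2 a l ∧ (pathLast a l).label = k :=
  Iff.rfl

lemma mem_actionGraph_succ_fst {w : AGVert} :
    w ∈ (actionGraph (k + 1)).1 ↔
      w ∈ (actionGraph k).1 ∨ ∃ p ∈ topPaths k, w = newVertex k p := by
  simp [actionGraph, topPaths, newVertex, and_assoc]

lemma mem_actionGraph_succ_snd {a w : AGVert} :
    (a, w) ∈ (actionGraph (k + 1)).2 ↔
      (a, w) ∈ (actionGraph k).2 ∨ ∃ l, (a, l) ∈ topPaths k ∧ w = newVertex k (a, l) := by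
  simp [actionGraph, topPaths, newVertex, and_assoc]

lemma label_le_of_mem_actionGraph {v : AGVert} (hv : v ∈ (actionGraph k).1) : v.label ≤ k := by
  induction k with
  | zero => simp_all [actionGraph]
  | succ k ih =>
    obtain hv | ⟨p, -, rfl⟩ := mem_actionGraph_succ_fst.mp hv
    · exact (ih hv).trans k.le_succ
    · exact le_rfl

lemma mem_actionGraph_of_edge {a b : AGVert} (h : (a, b) ∈ (actionGraph k).2) :
    a ∈ (actionGraph k).1 ∧ b ∈ (actionGraph k).1 ∧ a.label < b.label := by
  induction k with
  | zero => simp [actionGraph] at h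
  | succ k ih =>
    obtain h | ⟨l, hl, rfl⟩ := mem_actionGraph_succ_snd.mp h
    · obtain ⟨ha, hb, hab⟩ := ih h
      exact ⟨mem_actionGraph_succ_fst.mpr (.inl ha), mem_actionGraph_succ_fst.mpr (.inl hb), hab⟩
    · exact ⟨mem_actionGraph_succ_fst.mpr (.inl hl.1),
        mem_actionGraph_succ_fst.mpr (.inr ⟨(a, l), hl, rfl⟩),
        Nat.lt_succ_of_le (label_le_of_mem_actionGraph hl.1)⟩

lemma pathLast_mem_actionGraph {a : AGVert} {l : List AGVert} (ha : a ∈ (actionGraph k).1)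
    (h : IsPath (actionGraph k).2 a l) : pathLast a l ∈ (actionGraph k).1 := by
  induction l generalizing a with
  | nil => exact ha
  | cons b l ih =>
    rw [isPath_cons] at h
    exact ih (mem_actionGraph_of_edge h.1).2.1 h.2

lemma label_add_length_le {a : AGVert} {l : List AGVert} (h : IsPath (actionGraph k).2 a l) :
    a.label + l.length ≤ (pathLast a l).label := by
  induction l generalizing a with
  | nil => simp
  | cons b l ih =>
    rw [isPath_cons] at h
    have := (mem_actionGraph_of_edge h.1).2.2
    have := ih h.2
    simp only [List.length_cons, pathLast_cons]
    omega

lemma length_le_of_mem_topPaths {p : AGVert × List AGVert} (hp : p ∈ topPaths k) :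
    p.2.length ≤ k := by
  have := label_add_length_le hp.2.1
  have := hp.2.2
  omega

lemma mem_actionGraph_of_mem_succ {v : AGVert} (hv : v ∈ (actionGraph (k + 1)).1)
    (hlabel : v.label ≤ k) : v ∈ (actionGraph k).1 := by
  obtain hv | ⟨p, -, rfl⟩ := mem_actionGraph_succ_fst.mp hv
  · exact hv
  · simp [newVertex, AGVert.label] at hlabel

lemma mem_edges_of_mem_succ {a b : AGVert} (h : (a, b) ∈ (actionGraph (k + 1)).2)
    (hlabel : b.label ≤ k) : (a, b) ∈ (actionGraph k).2 := by
  obtain h | ⟨l, -, rfl⟩ := mem_actionGraph_succ_snd.mp h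
  · exact h
  · simp [newVertex, AGVert.label] at hlabel

lemma IsPath.of_succ {a : AGVert} {l : List AGVert} (h : IsPath (actionGraph (k + 1)).2 a l)
    (hlabel : (pathLast a l).label ≤ k) : IsPath (actionGraph k).2 a l := by
  induction l generalizing a with
  | nil => simp
  | cons b l ih =>
    rw [isPath_cons] at h ⊢
    have hb := label_add_length_le h.2
    exact ⟨mem_edges_of_mem_succ h.1 (by simp at hlabel; omega), ih h.2 (by simpa using hlabel)⟩

lemma actionGraph_snd_subset_succ : (actionGraph k).2 ⊆ (actionGraph (k + 1)).2 :=
  Set.subset_union_left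

lemma mem_topPaths_succ_nil {w : AGVert} :
    (w, []) ∈ topPaths (k + 1) ↔ ∃ p ∈ topPaths k, w = newVertex k p := by
  constructor
  · rintro ⟨hw, -, hlabel⟩
    obtain hw | hw := mem_actionGraph_succ_fst.mp hw
    · have := label_le_of_mem_actionGraph hw
      simp_all
    · exact hw
  · rintro ⟨p, hp, rfl⟩
    exact ⟨mem_actionGraph_succ_fst.mpr (.inr ⟨p, hp, rfl⟩), isPath_nil _, rfl⟩

lemma mem_topPaths_succ_append_singleton {x v : AGVert} {m : List AGVert} :
    (x, m ++ [v]) ∈ topPaths (k + 1) ↔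
      ∃ l, (x, m ++ l) ∈ topPaths k ∧ v = newVertex k (pathLast x m, l) := by
  rw [mem_topPaths, isPath_append_singleton]
  constructor
  · rintro ⟨hx, ⟨hm, hedge⟩, hlabel⟩
    obtain hedge | ⟨l, hl, rfl⟩ := mem_actionGraph_succ_snd.mp hedge
    · have := label_le_of_mem_actionGraph (mem_actionGraph_of_edge hedge).2.1
      simp_all
    have hlast : (pathLast x m).label ≤ k := label_le_of_mem_actionGraph hl.1
    have hxm := label_add_length_le hm
    refine ⟨l, mem_topPaths.mpr ⟨mem_actionGraph_of_mem_succ hx (by omega), ?_, ?_⟩, rfl⟩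
    · exact isPath_append.mpr ⟨hm.of_succ hlast, hl.2.1⟩
    · rw [pathLast_append]; exact hl.2.2
  · rintro ⟨l, ⟨hx, hpath, hlabel⟩, rfl⟩
    rw [isPath_append] at hpath
    rw [pathLast_append] at hlabel
    refine ⟨mem_actionGraph_succ_fst.mpr (.inl hx), ⟨?_, ?_⟩, by simp⟩
    · exact hpath.1.mono actionGraph_snd_subset_succ
    · exact mem_actionGraph_succ_snd.mpr
        (.inr ⟨l, ⟨pathLast_mem_actionGraph hx hpath.1, hpath.2, hlabel⟩, rfl⟩)

lemma image_newVertex_nil :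
    (fun p => (newVertex k p, [])) '' topPaths k = {p ∈ topPaths (k + 1) | p.2.length = 0} := by
  ext ⟨w, m⟩
  simp only [Set.mem_image, Set.mem_setOf_eq, List.length_eq_zero_iff, Prod.mk.injEq]
  constructor
  · rintro ⟨p, hp, rfl, rfl⟩
    exact ⟨mem_topPaths_succ_nil.mpr ⟨p, hp, rfl⟩, rfl⟩
  · rintro ⟨hw, rfl⟩
    obtain ⟨p, hp, rfl⟩ := mem_topPaths_succ_nil.mp hw
    exact ⟨p, hp, rfl, rfl⟩

def shortcut (k n : ℕ) (p : AGVert × List AGVert) : AGVert × List AGVert :=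
  (p.1, p.2.take n ++ [newVertex k (pathLast p.1 (p.2.take n), p.2.drop n)])

lemma shortcut_injective (n : ℕ) : Function.Injective (shortcut k n) := by
  rintro ⟨x, m⟩ ⟨x', m'⟩ h
  simp only [shortcut, Prod.mk.injEq] at h
  obtain ⟨rfl, h⟩ := h
  obtain ⟨htake, hdrop⟩ := List.append_inj' h rfl
  simp only [List.cons.injEq, newVertex, AGVert.node.injEq] at hdrop
  rw [← List.take_append_drop n m, ← List.take_append_drop n m', htake, hdrop.1.2.2]

lemma image_shortcut (n : ℕ) :
    shortcut k n '' {p ∈ topPaths k | n ≤ p.2.length} =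
      {p ∈ topPaths (k + 1) | p.2.length = n + 1} := by
  ext ⟨x, m'⟩
  constructor
  · rintro ⟨⟨x, m⟩, ⟨hp, hn⟩, h⟩
    rw [← h]
    refine ⟨mem_topPaths_succ_append_singleton.mpr ⟨m.drop n, ?_, rfl⟩, ?_⟩
    · rwa [List.take_append_drop]
    · simpa [shortcut] using hn
  · rintro ⟨hp, hlen⟩
    obtain ⟨m, v, rfl⟩ : ∃ m v, m' = m ++ [v] :=
      ⟨m'.dropLast, m'.getLast (List.ne_nil_of_length_eq_add_one hlen),
        (List.dropLast_append_getLast _).symm⟩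
    obtain ⟨l, hl, rfl⟩ := mem_topPaths_succ_append_singleton.mp hp
    obtain rfl : m.length = n := by simpa using hlen
    exact ⟨(x, m ++ l), ⟨hl, by simp⟩, by simp [shortcut]⟩

end ActionGraph

def topPathsGE (k n : ℕ) : Set (AGVert × List AGVert) := {p ∈ topPaths k | n ≤ p.2.length}

lemma topPathsGE_zero (k : ℕ) : topPathsGE k 0 = topPaths k := by
  simp [topPathsGE]

lemma topPathsGE_eq_empty {k n : ℕ} (h : k < n) : topPathsGE k n = ∅ := by
  refine Set.eq_empty_of_forall_notMem fun p ⟨hp, hn⟩ => ?_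
  have := length_le_of_mem_topPaths hp
  omega

lemma topPaths_zero : topPaths 0 = {(.root, [])} := by
  ext ⟨x, m⟩
  cases m with
  | nil => simp +contextual [topPaths, actionGraph]
  | cons b m => simp [topPaths, actionGraph]

lemma encard_topPathsGE (k n : ℕ) :
    (topPathsGE k n).encard =
      {p ∈ topPaths k | p.2.length = n}.encard + (topPathsGE k (n + 1)).encard := by
  rw [← Set.encard_union_eq]
  · congr 1
    ext p
    simp only [topPathsGE, Set.mem_union, Set.mem_setOf_eq, ← and_or_left]
    exact and_congr_right fun _ => by omega
  · refine Set.disjoint_left.mpr fun p ⟨_, hp⟩ (hp' : p ∈ topPathsGE k (n + 1)) => ?_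
    have := hp'.2
    omega

lemma encard_topPathsGE_succ_zero (k : ℕ) :
    (topPathsGE (k + 1) 0).encard = (topPathsGE k 0).encard + (topPathsGE (k + 1) 1).encard := by
  rw [encard_topPathsGE, ← image_newVertex_nil, topPathsGE_zero k,
    Function.Injective.encard_image fun p q h => newVertex_injective k (congrArg Prod.fst h)]

lemma encard_topPathsGE_succ_succ (k n : ℕ) :
    (topPathsGE (k + 1) (n + 1)).encard =
      (topPathsGE k n).encard + (topPathsGE (k + 1) (n + 2)).encard := by
  rw [encard_topPathsGE, ← image_shortcut, (shortcut_injective n).encard_image]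
  rfl

lemma encard_topPathsGE_self (n : ℕ) : (topPathsGE n n).encard = 1 := by
  induction n with
  | zero => simp [topPathsGE_zero, topPaths_zero]
  | succ n ih => simp [encard_topPathsGE_succ_succ, ih, topPathsGE_eq_empty]

theorem encard_topPathsGE_add (m n : ℕ) : (topPathsGE (n + m) n).encard = ballot m n := by
  induction m generalizing n with
  | zero => simpa using encard_topPathsGE_self n
  | succ m ih =>
    induction n with
    | zero =>
      have h₀ : (topPathsGE m 0).encard = ballot m 0 := by simpa using ih 0
      have h₁ : (topPathsGE (m + 1) 1).encard = ballot m 1 := by simpa [add_comm] using ih 1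
      rw [zero_add, encard_topPathsGE_succ_zero, h₀, h₁, ballot_succ_zero, Nat.cast_add]
    | succ n ihn =>
      have h₂ : (topPathsGE (n + (m + 1) + 1) (n + 2)).encard = ballot m (n + 2) := by
        rw [show n + (m + 1) + 1 = n + 2 + m by omega]; exact ih (n + 2)
      rw [show n + 1 + (m + 1) = n + (m + 1) + 1 by omega, encard_topPathsGE_succ_succ, ihn, h₂,
        ballot_succ_succ, Nat.cast_add]


/-- The total number of directed paths in `A k` whose terminal vertex is labeled `k`
(including the trivial path at each vertex labeled `k`) is the `(k+1)`st Catalan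
number. -/
theorem stmt_4 (k : ℕ) :
    {p : AGVert × List AGVert | p.1 ∈ (actionGraph k).1 ∧
      IsPath (actionGraph k).2 p.1 p.2 ∧ (pathLast p.1 p.2).label = k}.ncard =
      catalan (k + 1) := by
  have h := encard_topPathsGE_add k 0
  rw [zero_add, topPathsGE_zero] at h
  show (topPaths k).ncard = _
  rw [Set.ncard_def, h, ENat.toNat_coe, ballot_zero_right]
end

section
/- For every natural number k \ge 1, no directed path in the action graph A_k whose initial vertex is the vertex labeled 1 passes through the vertex labeled 0; equivalently, every vertex appearing on a path starting at the vertex labeled 1 has label at least 1. -/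
lemma edge_target_label (k : ℕ) : ∀ e ∈ (actionGraph k).2, 1 ≤ e.2.label := by
  induction k with
  | zero => intro e he; exact absurd he (Set.notMem_empty e)
  | succ k ih =>
    intro e he
    rcases he with he | ⟨a, l, _, _, _, rfl⟩
    · exact ih e he
    · simp [AGVert.label]

/-- For `k ≥ 1`, no directed path in `A k` starting at the vertex labeled 1 passes
through the vertex labeled 0: every vertex on such a path has label at least 1. -/
theorem stmt_6 (k : ℕ) (hk : 1 ≤ k) (a : AGVert) (l : List AGVert)
    (ha : a ∈ (actionGraph k).1) (hp : IsPath (actionGraph k).2 a l)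
    (h1 : a.label = 1) :
    ∀ v ∈ a :: l, 1 ≤ v.label := by
  intro v hv
  rcases List.mem_cons.mp hv with rfl | hv
  · omega
  · clear h1 ha
    induction l generalizing a with
    | nil => cases hv
    | cons b t ih =>
      rcases List.chain_cons.mp hp with ⟨hab, hrest⟩
      rcases List.mem_cons.mp hv with rfl | hv'
      · have := edge_target_label k (a, v) hab
        simpa using this
      · exact ih b hrest hv hv'
end

section
/- For every natural number k, the total number of vertices of the action graph A_k equals C_0 + C_1 + \cdots + C_k, the sum of the first k+1 Catalan numbers, and the total number of nontrivial edges of A_k equals (C_0 + C_1 + \cdots + C_k) - 1. -/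
/-! Every vertex `node (k + 1) a l` receives exactly one edge, from `a`, so `A k` is a tree rooted
at `root`, and the paths ending at a vertex `v` are exactly the final segments of the path from
the root to `v`. Hence a vertex whose root path has `L` vertices spawns `L` children, whose root
paths have `2, …, L + 1` vertices. The Catalan series satisfies `C = 1 + X C²`, hence
`C ^ L = 1 + X ∑_{n < L} C ^ (n + 2)`, and by induction a vertex whose root path has `L` vertices
has `[X ^ j] C ^ L` descendants `j` levels further down; for the root that is `catalan j`.
Finally a tree with `N` vertices has `N - 1` edges. -/

open Finset PowerSeries

namespace AGVert

noncomputable instance : DecidableEq AGVert := Classical.decEq _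

def rootPath : AGVert → List AGVert
  | root => [root]
  | node j a l => a.rootPath ++ [node j a l]

def parent : AGVert → AGVert
  | root => root
  | node _ a _ => a

lemma rootPath_ne_nil (v : AGVert) : v.rootPath ≠ [] := by
  cases v <;> simp [rootPath]

lemma mem_rootPath_self (v : AGVert) : v ∈ v.rootPath := by
  cases v <;> simp [rootPath]

lemma getLast?_rootPath (v : AGVert) : v.rootPath.getLast? = some v := by
  cases v <;> simp [rootPath]

lemma dropLast_rootPath_append (v : AGVert) : v.rootPath.dropLast ++ [v] = v.rootPath :=
  List.dropLast_append_getLast? v (getLast?_rootPath v)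

lemma rootPath_injective : Function.Injective rootPath := fun v w h =>
  Option.some_injective _ (by rw [← getLast?_rootPath, h, getLast?_rootPath])

lemma rootPath_of_append_cons {p t : List AGVert} {b : AGVert} :
    ∀ {v : AGVert}, p ++ b :: t = v.rootPath → b.rootPath = p ++ [b]
  | root, h => by
    obtain ⟨rfl, rfl, rfl⟩ : p = [] ∧ b = root ∧ t = [] := by
      rcases p with _ | ⟨x, _ | ⟨y, p⟩⟩ <;> simp_all [rootPath]
    rfl
  | node j a l, h => by
    rw [rootPath] at h
    rcases List.eq_nil_or_concat t with rfl | ⟨t, x, rfl⟩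
    · obtain ⟨rfl, hb⟩ := List.append_inj' h rfl
      cases hb
      rfl
    · have h' : (p ++ b :: t) ++ [x] = a.rootPath ++ [node j a l] := by simpa using h
      exact rootPath_of_append_cons (List.append_inj' h' rfl).1

lemma rootPath_eq_append_singleton_iff {v w : AGVert} :
    w.rootPath = v.rootPath ++ [w] ↔ w ≠ root ∧ w.parent = v := by
  cases w with
  | root => simpa [rootPath] using rootPath_ne_nil v
  | node j a l => simp [rootPath, parent, rootPath_injective.eq_iff]

lemma pathLast_eq_of_rootPath_append {a v : AGVert} {l : List AGVert}
    (h : a.rootPath ++ l = v.rootPath) : pathLast a l = v := by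
  apply Option.some_injective
  rw [pathLast, ← List.getLast?_eq_some_getLast, ← getLast?_rootPath, ← h,
    ← dropLast_rootPath_append, List.append_assoc, List.singleton_append,
    List.getLast?_append_of_ne_nil _ (List.cons_ne_nil a l)]

def treeEdges (V : Set AGVert) : Set (AGVert × AGVert) :=
  (fun w => (w.parent, w)) '' (V \ {root})

lemma mk_mem_treeEdges {V : Set AGVert} {v w : AGVert} :
    (v, w) ∈ treeEdges V ↔ w ∈ V ∧ w.rootPath = v.rootPath ++ [w] := by
  rw [rootPath_eq_append_singleton_iff]
  simp only [treeEdges, Set.mem_image, Set.mem_sdiff, Set.mem_singleton_iff, Prod.mk.injEq]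
  constructor
  · rintro ⟨w, ⟨hw, hroot⟩, rfl, rfl⟩
    exact ⟨hw, hroot, rfl⟩
  · rintro ⟨hw, hroot, rfl⟩
    exact ⟨w, ⟨hw, hroot⟩, rfl, rfl⟩

lemma isPath_nil (E : Set (AGVert × AGVert)) (a : AGVert) : IsPath E a [] :=
  List.isChain_singleton a

lemma isPath_cons {E : Set (AGVert × AGVert)} {a b : AGVert} {t : List AGVert} :
    IsPath E a (b :: t) ↔ (a, b) ∈ E ∧ IsPath E b t :=
  List.isChain_cons_cons

lemma isPath_treeEdges_iff {V : Set AGVert} :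
    ∀ {a : AGVert} {l : List AGVert},
      IsPath (treeEdges V) a l ↔
        (∀ x ∈ l, x ∈ V) ∧ ∃ v : AGVert, a.rootPath ++ l = v.rootPath
  | a, [] => by simpa using isPath_nil _ a
  | a, b :: t => by
    rw [isPath_cons, isPath_treeEdges_iff, mk_mem_treeEdges, List.forall_mem_cons]
    constructor
    · rintro ⟨⟨hb, hab⟩, ht, v, hv⟩
      exact ⟨⟨hb, ht⟩, v, by rw [← hv, hab]; simp⟩
    · rintro ⟨⟨hb, ht⟩, v, hv⟩
      have hab : b.rootPath = a.rootPath ++ [b] := rootPath_of_append_cons hv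
      exact ⟨⟨hb, hab⟩, ht, v, by rw [hab, ← hv]; simp⟩

lemma ncard_treeEdges {V : Set AGVert} (h : root ∈ V) : (treeEdges V).ncard = V.ncard - 1 := by
  rw [treeEdges, Set.ncard_image_of_injective _ fun v w h => congrArg Prod.snd h,
    Set.ncard_sdiff_singleton_of_mem h]

lemma treeEdges_union_nodes (V : Set AGVert) (j : ℕ) (P : AGVert → List AGVert → Prop) :
    treeEdges (V ∪ {w | ∃ a l, P a l ∧ w = node j a l})
      = treeEdges V ∪ {e | ∃ a l, P a l ∧ e = (a, node j a l)} := by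
  rw [treeEdges, Set.union_sdiff_distrib, Set.image_union, treeEdges]
  congr 1
  ext e
  simp only [Set.mem_image, Set.mem_sdiff, Set.mem_ofPred_eq, Set.mem_singleton_iff]
  constructor
  · rintro ⟨_, ⟨⟨a, l, hP, rfl⟩, -⟩, rfl⟩
    exact ⟨a, l, hP, rfl⟩
  · rintro ⟨a, l, hP, rfl⟩
    exact ⟨_, ⟨⟨a, l, hP, rfl⟩, AGVert.noConfusion⟩, rfl⟩

def mkNode (j : ℕ) : List AGVert → AGVert
  | [] => root
  | a :: l => node j a l

/-- The vertices created at step `j` from the paths ending at `v`: these paths are the nonempty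
final segments of `v.rootPath`. -/
noncomputable def spawn (j : ℕ) (v : AGVert) : Finset AGVert :=
  (range v.rootPath.length).image fun n => mkNode j (v.rootPath.drop n)

lemma exists_drop_rootPath_eq_cons {v : AGVert} {n : ℕ} (hn : n < v.rootPath.length) :
    ∃ a l, v.rootPath.drop n = a :: l ∧ a.rootPath ++ l = v.rootPath := by
  refine ⟨_, _, List.drop_eq_getElem_cons hn, ?_⟩
  have hsplit := List.take_append_drop n v.rootPath
  rw [List.drop_eq_getElem_cons hn] at hsplit
  rw [rootPath_of_append_cons hsplit, List.append_assoc, List.singleton_append, hsplit]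

lemma length_rootPath_mkNode_drop (j : ℕ) {v : AGVert} {n : ℕ} (hn : n < v.rootPath.length) :
    (mkNode j (v.rootPath.drop n)).rootPath.length = n + 2 := by
  obtain ⟨a, l, hdrop, hv⟩ := exists_drop_rootPath_eq_cons hn
  have hl := congrArg List.length hdrop
  have ha := congrArg List.length hv
  simp only [List.length_drop, List.length_cons, List.length_append] at hl ha
  simp only [hdrop, mkNode, rootPath, List.length_append, List.length_singleton]
  omega

lemma mem_spawn {j : ℕ} {v w : AGVert} :
    w ∈ spawn j v ↔ ∃ a l, a.rootPath ++ l = v.rootPath ∧ w = node j a l := by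
  simp only [spawn, mem_image, mem_range]
  constructor
  · rintro ⟨n, hn, rfl⟩
    obtain ⟨a, l, hdrop, hv⟩ := exists_drop_rootPath_eq_cons hn
    exact ⟨a, l, hv, by rw [hdrop, mkNode]⟩
  · rintro ⟨a, l, hv, rfl⟩
    obtain ⟨p, hp⟩ : ∃ p, a.rootPath = p ++ [a] := ⟨_, (dropLast_rootPath_append a).symm⟩
    rw [← hv, hp]
    exact ⟨p.length, by simp, by simp [mkNode]⟩

lemma sum_spawn {M : Type*} [AddCommMonoid M] (f : ℕ → M) (j : ℕ) (v : AGVert) :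
    ∑ w ∈ spawn j v, f w.rootPath.length = ∑ n ∈ range v.rootPath.length, f (n + 2) := by
  rw [spawn, sum_image fun n hn n' hn' h => by
    simpa [length_rootPath_mkNode_drop j (mem_range.1 hn),
      length_rootPath_mkNode_drop j (mem_range.1 hn')] using congrArg (·.rootPath.length) h]
  exact sum_congr rfl fun n hn => by rw [length_rootPath_mkNode_drop j (mem_range.1 hn)]

lemma disjoint_spawn (j : ℕ) {v v' : AGVert} (h : v ≠ v') :
    Disjoint (spawn j v) (spawn j v') := by
  refine disjoint_left.2 fun w hw hw' => h ?_
  obtain ⟨a, l, hv, rfl⟩ := mem_spawn.1 hw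
  obtain ⟨a', l', hv', he⟩ := mem_spawn.1 hw'
  cases he
  exact rootPath_injective (hv.symm.trans hv')

noncomputable def level : ℕ → Finset AGVert
  | 0 => {root}
  | j + 1 => (level j).biUnion (spawn (j + 1))

noncomputable def vertices (k : ℕ) : Finset AGVert :=
  (range (k + 1)).biUnion level

lemma mem_vertices {k : ℕ} {v : AGVert} : v ∈ vertices k ↔ ∃ i ≤ k, v ∈ level i := by
  simp [vertices]

lemma root_mem_vertices (k : ℕ) : root ∈ vertices k :=
  mem_vertices.2 ⟨0, k.zero_le, mem_singleton_self root⟩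

lemma vertices_succ (k : ℕ) : vertices (k + 1) = vertices k ∪ level (k + 1) := by
  rw [vertices, range_add_one, biUnion_insert, union_comm, vertices]

lemma mem_level_succ {j : ℕ} {w : AGVert} :
    w ∈ level (j + 1) ↔
      ∃ a l, (∃ v ∈ level j, a.rootPath ++ l = v.rootPath) ∧ w = node (j + 1) a l := by
  simp only [level, mem_biUnion, mem_spawn]
  aesop

lemma label_of_mem_level {j : ℕ} {v : AGVert} (hv : v ∈ level j) : v.label = j := by
  cases j with
  | zero => rw [mem_singleton.1 hv]; rfl
  | succ j =>
    obtain ⟨a, l, -, rfl⟩ := mem_level_succ.1 hv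
    rfl

lemma mem_level_iff {k : ℕ} {v : AGVert} :
    v ∈ level k ↔ v ∈ vertices k ∧ v.label = k := by
  refine ⟨fun hv => ⟨mem_vertices.2 ⟨k, le_rfl, hv⟩, label_of_mem_level hv⟩, ?_⟩
  rintro ⟨hv, rfl⟩
  obtain ⟨i, -, hi⟩ := mem_vertices.1 hv
  rwa [label_of_mem_level hi]

lemma mem_vertices_of_mem_rootPath {j : ℕ} {v : AGVert} (hv : v ∈ level j) :
    ∀ u ∈ v.rootPath, u ∈ vertices j := by
  induction j generalizing v with
  | zero =>
    rw [mem_singleton.1 hv]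
    simp [rootPath, root_mem_vertices]
  | succ j ih =>
    obtain ⟨a, l, ⟨v', hv', hv'a⟩, rfl⟩ := mem_level_succ.1 hv
    intro u hu
    rw [rootPath, List.mem_append, List.mem_singleton] at hu
    rcases hu with hu | rfl
    · rw [vertices_succ]
      exact mem_union_left _ (ih hv' u (hv'a ▸ List.mem_append_left l hu))
    · exact mem_vertices.2 ⟨j + 1, le_rfl, hv⟩

lemma isPath_to_level_iff {k : ℕ} {a : AGVert} {l : List AGVert} :
    a ∈ (vertices k : Set AGVert) ∧ IsPath (treeEdges (vertices k)) a l ∧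
        (pathLast a l).label = k ↔ ∃ v ∈ level k, a.rootPath ++ l = v.rootPath := by
  rw [isPath_treeEdges_iff]
  constructor
  · rintro ⟨ha, ⟨hl, v, hv⟩, hlabel⟩
    have hlast : pathLast a l ∈ a :: l := List.getLast_mem _
    rw [pathLast_eq_of_rootPath_append hv] at hlast hlabel
    refine ⟨v, mem_level_iff.2 ⟨?_, hlabel⟩, hv⟩
    rcases List.mem_cons.1 hlast with rfl | hvl
    · exact ha
    · exact hl v hvl
  · rintro ⟨v, hv, hav⟩
    have hsub := mem_vertices_of_mem_rootPath hv
    refine ⟨hsub a ?_, ⟨fun x hx => hsub x ?_, v, hav⟩, ?_⟩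
    · rw [← hav]; exact List.mem_append_left l (mem_rootPath_self a)
    · rw [← hav]; exact List.mem_append_right _ hx
    · rw [pathLast_eq_of_rootPath_append hav, label_of_mem_level hv]

theorem actionGraph_eq : ∀ k, actionGraph k = ((vertices k : Set AGVert), treeEdges (vertices k))
  | 0 => by simp [actionGraph, vertices, level, treeEdges]
  | k + 1 => by
    have hlevel : (level (k + 1) : Set AGVert) = {w | ∃ a l,
        (a ∈ (vertices k : Set AGVert) ∧ IsPath (treeEdges (vertices k)) a l ∧
          (pathLast a l).label = k) ∧ w = node (k + 1) a l} := by
      ext w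
      simp only [Set.mem_ofPred_eq, isPath_to_level_iff]
      exact mem_level_succ
    rw [vertices_succ, coe_union, hlevel, treeEdges_union_nodes, actionGraph, actionGraph_eq k]
    simp only [and_assoc]

lemma catalanSeries_pow (L : ℕ) :
    catalanSeries ^ L = X * ∑ n ∈ range L, catalanSeries ^ (n + 2) + 1 := by
  have h := geom_sum_mul_add (catalanSeries ^ 2 * X) L
  rw [catalanSeries_sq_mul_X_add_one] at h
  rw [← h, sum_mul, mul_sum]
  congr 1
  exact sum_congr rfl fun n _ => by ring

lemma coeff_succ_catalanSeries_pow (j L : ℕ) :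
    coeff (j + 1) (catalanSeries ^ L) = ∑ n ∈ range L, coeff j (catalanSeries ^ (n + 2)) := by
  rw [catalanSeries_pow, map_add, coeff_succ_X_mul, map_sum, coeff_one, if_neg j.succ_ne_zero,
    add_zero]

lemma card_level_add (i j : ℕ) :
    (level (i + j)).card = ∑ v ∈ level i, coeff j (catalanSeries ^ v.rootPath.length) := by
  induction j generalizing i with
  | zero => simp [coeff_zero_eq_constantCoeff]
  | succ j ih =>
    rw [← add_assoc, add_right_comm, ih, level, sum_biUnion fun v _ v' _ => disjoint_spawn _]
    exact sum_congr rfl fun v _ => by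
      rw [sum_spawn fun L => coeff j (catalanSeries ^ L), coeff_succ_catalanSeries_pow]

lemma card_level (j : ℕ) : (level j).card = catalan j := by
  simpa [level, rootPath] using card_level_add 0 j

lemma card_vertices (k : ℕ) : (vertices k).card = ∑ i ∈ range (k + 1), catalan i := by
  rw [vertices, card_biUnion fun i _ i' _ h => disjoint_left.2 fun v hi hi' =>
    h (by rw [← label_of_mem_level hi, label_of_mem_level hi'])]
  exact sum_congr rfl fun i _ => card_level i

end AGVert

/-- The total number of vertices of `A k` is `C 0 + C 1 + ⋯ + C k`, and the total number
of nontrivial edges of `A k` is `(C 0 + C 1 + ⋯ + C k) - 1`. -/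
theorem stmt_8 (k : ℕ) :
    (actionGraph k).1.ncard = ∑ i ∈ Finset.range (k + 1), catalan i ∧
    (actionGraph k).2.ncard = (∑ i ∈ Finset.range (k + 1), catalan i) - 1 := by
  rw [AGVert.actionGraph_eq, AGVert.ncard_treeEdges (AGVert.root_mem_vertices k),
    Set.ncard_coe_finset, AGVert.card_vertices]
  exact ⟨rfl, rfl⟩
end

section
/- For every natural number k, the underlying undirected graph of the action graph A_k is a tree (connected, with no loops, multiple edges, or cycles), and the vertices of A_{k+1} that are not vertices of A_k are precisely the leaves of A_{k+1} when A_{k+1} is viewed as a rooted tree with root the vertex labeled 0. -/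
namespace SimpleGraph

variable {α : Type*} (G : SimpleGraph α) (m : α → ℕ)

lemma connected_of_exists_adj_lt (r : α) (h0 : ∀ a, m a = 0 → a = r)
    (hlower : ∀ a, m a ≠ 0 → ∃ b, G.Adj a b ∧ m b < m a) : G.Connected := by
  have reach : ∀ a, G.Reachable a r := by
    intro a
    induction h : m a using Nat.strong_induction_on generalizing a with
    | _ n ih =>
      by_cases ha : m a = 0
      · rw [h0 a ha]
      · obtain ⟨b, hab, hb⟩ := hlower a ha
        exact hab.reachable.trans (ih _ (h ▸ hb) b rfl)
  have : Nonempty α := ⟨r⟩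
  exact ⟨fun a b => (reach a).trans (reach b).symm⟩

lemma isAcyclic_of_unique_adj_lt (hne : ∀ a b, G.Adj a b → m a ≠ m b)
    (hunique : ∀ a b c, G.Adj a b → G.Adj a c → m b < m a → m c < m a → b = c) :
    G.IsAcyclic := by
  classical
  intro u c hc
  -- Rotate the cycle to a vertex `v` of maximal height; both its neighbours on it are lower.
  obtain ⟨v, hv, hmax⟩ := c.support.toFinset.exists_max_image m ⟨u, by simp⟩
  rw [List.mem_toFinset] at hv
  have hd : (c.rotate v hv).IsCycle := (Walk.isCycle_rotate hv).2 hc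
  have lower : ∀ x ∈ (c.rotate v hv).support, G.Adj v x → m x < m v := fun x hx hvx =>
    (hmax x (List.mem_toFinset.2 ((c.mem_support_rotate_iff v hv).1 hx))).lt_of_ne
      (hne v x hvx).symm
  have hsnd := (c.rotate v hv).adj_snd hd.not_nil
  have hpen := ((c.rotate v hv).adj_penultimate hd.not_nil).symm
  exact hd.snd_ne_penultimate (hunique v _ _ hsnd hpen
    (lower _ (Walk.getVert_mem_support _ _) hsnd) (lower _ (Walk.getVert_mem_support _ _) hpen))

end SimpleGraph

namespace actionGraph

lemma root_mem : ∀ k, AGVert.root ∈ (actionGraph k).1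
  | 0 => rfl
  | k + 1 => Or.inl (root_mem k)

lemma label_le : ∀ {k v}, v ∈ (actionGraph k).1 → v.label ≤ k
  | 0, _, rfl => le_rfl
  | k + 1, _, .inl hv => (label_le hv).trans k.le_succ
  | _ + 1, _, .inr ⟨_, _, _, _, _, rfl⟩ => le_rfl

lemma eq_root_of_label_eq_zero : ∀ {k v}, v ∈ (actionGraph k).1 → v.label = 0 → v = .root
  | 0, _, rfl, _ => rfl
  | _ + 1, _, .inl hv, h => eq_root_of_label_eq_zero hv h
  | _ + 1, _, .inr ⟨_, _, _, _, _, rfl⟩, h => absurd h (Nat.succ_ne_zero _)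

lemma mem_of_mem_edges : ∀ {k v w}, (v, w) ∈ (actionGraph k).2 →
    v ∈ (actionGraph k).1 ∧ w ∈ (actionGraph k).1
  | 0, _, _, h => absurd h (Set.notMem_empty _)
  | _ + 1, _, _, .inl h => (mem_of_mem_edges h).imp .inl .inl
  | _ + 1, _, _, .inr ⟨a, l, ha, hp, hl, he⟩ => by
    cases he
    exact ⟨.inl ha, .inr ⟨_, l, ha, hp, hl, rfl⟩⟩

lemma label_lt_of_mem_edges : ∀ {k v w}, (v, w) ∈ (actionGraph k).2 → v.label < w.label
  | 0, _, _, h => absurd h (Set.notMem_empty _)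
  | _ + 1, _, _, .inl h => label_lt_of_mem_edges h
  | _ + 1, _, _, .inr ⟨_, _, ha, _, _, he⟩ => by
    cases he
    exact Nat.lt_succ_of_le (label_le ha)

lemma exists_eq_node_of_mem_edges : ∀ {k v w}, (v, w) ∈ (actionGraph k).2 →
    ∃ l, w = .node w.label v l
  | 0, _, _, h => absurd h (Set.notMem_empty _)
  | _ + 1, _, _, .inl h => exists_eq_node_of_mem_edges h
  | _ + 1, _, _, .inr ⟨_, l, _, _, _, he⟩ => by
    cases he
    exact ⟨l, rfl⟩

lemma eq_of_mem_edges_of_mem_edges {k k' : ℕ} {v v' w : AGVert}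
    (h : (v, w) ∈ (actionGraph k).2) (h' : (v', w) ∈ (actionGraph k').2) : v = v' := by
  obtain ⟨l, hl⟩ := exists_eq_node_of_mem_edges h
  obtain ⟨l', hl'⟩ := exists_eq_node_of_mem_edges h'
  rw [hl] at hl'
  exact (AGVert.node.inj hl').2.1

lemma exists_mem_edges_of_ne_root : ∀ {k v}, v ∈ (actionGraph k).1 → v ≠ .root →
    ∃ u, (u, v) ∈ (actionGraph k).2
  | 0, _, rfl, hne => absurd rfl hne
  | _ + 1, _, .inl hv, hne => (exists_mem_edges_of_ne_root hv hne).imp fun _ => .inl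
  | _ + 1, _, .inr ⟨a, l, ha, hp, hl, rfl⟩, _ => ⟨a, .inr ⟨a, l, ha, hp, hl, rfl⟩⟩

lemma mem_edges_succ_node : ∀ {k v}, v ∈ (actionGraph k).1 →
    (v, .node (v.label + 1) v []) ∈ (actionGraph (k + 1)).2
  | 0, _, rfl => .inr ⟨_, [], rfl, List.IsChain.singleton _, rfl, rfl⟩
  | _ + 1, _, .inl hv => .inl (mem_edges_succ_node hv)
  | _ + 1, _, .inr ⟨a, l, ha, hp, hl, rfl⟩ =>
    .inr ⟨_, [], .inr ⟨a, l, ha, hp, hl, rfl⟩, List.IsChain.singleton _, rfl, rfl⟩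

lemma label_eq_succ_of_not_mem : ∀ {k v}, v ∈ (actionGraph (k + 1)).1 →
    v ∉ (actionGraph k).1 → v.label = k + 1
  | _, _, .inl hv, hv' => absurd hv hv'
  | _, _, .inr ⟨_, _, _, _, _, rfl⟩, _ => rfl

def toSimpleGraph (k : ℕ) : SimpleGraph (actionGraph k).1 :=
  SimpleGraph.fromRel fun a b => (a.1, b.1) ∈ (actionGraph k).2

variable {k : ℕ}

lemma toSimpleGraph_adj {a b : (actionGraph k).1} :
    (toSimpleGraph k).Adj a b ↔
      (a.1, b.1) ∈ (actionGraph k).2 ∨ (b.1, a.1) ∈ (actionGraph k).2 := by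
  simp only [toSimpleGraph, SimpleGraph.fromRel_adj, and_iff_right_iff_imp]
  rintro (h | h) rfl <;> exact (label_lt_of_mem_edges h).false

lemma connected_toSimpleGraph (k : ℕ) : (toSimpleGraph k).Connected := by
  refine SimpleGraph.connected_of_exists_adj_lt _ (fun v => v.1.label) ⟨.root, root_mem k⟩
    (fun v hv => Subtype.ext (eq_root_of_label_eq_zero v.2 hv)) fun v hv => ?_
  obtain ⟨u, hu⟩ := exists_mem_edges_of_ne_root v.2 fun h => hv (by rw [h]; rfl)
  exact ⟨⟨u, (mem_of_mem_edges hu).1⟩, toSimpleGraph_adj.2 (.inr hu),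
    label_lt_of_mem_edges hu⟩

lemma isAcyclic_toSimpleGraph (k : ℕ) : (toSimpleGraph k).IsAcyclic := by
  refine SimpleGraph.isAcyclic_of_unique_adj_lt _ (fun v => v.1.label) (fun a b hab => ?_)
    fun a b c hab hac hb hc => ?_
  · rcases toSimpleGraph_adj.1 hab with h | h
    exacts [(label_lt_of_mem_edges h).ne, (label_lt_of_mem_edges h).ne']
  · obtain h | h := toSimpleGraph_adj.1 hab
    · exact absurd (label_lt_of_mem_edges h) hb.asymm
    obtain h' | h' := toSimpleGraph_adj.1 hac
    · exact absurd (label_lt_of_mem_edges h') hc.asymm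
    exact Subtype.ext (eq_of_mem_edges_of_mem_edges h h')

lemma ncard_neighborSet_eq_one_of_not_mem {v : (actionGraph (k + 1)).1}
    (hv : v.1 ∉ (actionGraph k).1) : ((toSimpleGraph (k + 1)).neighborSet v).ncard = 1 := by
  have hlabel := label_eq_succ_of_not_mem v.2 hv
  obtain ⟨u, hu⟩ := exists_mem_edges_of_ne_root v.2 fun h => hv (h ▸ root_mem k)
  refine Set.ncard_eq_one.2 ⟨⟨u, (mem_of_mem_edges hu).1⟩,
    Set.eq_singleton_iff_unique_mem.2 ⟨toSimpleGraph_adj.2 (.inr hu), fun w hw => ?_⟩⟩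
  obtain h | h := toSimpleGraph_adj.1 hw
  · have := label_lt_of_mem_edges h
    have := label_le (mem_of_mem_edges h).2
    omega
  · exact Subtype.ext (eq_of_mem_edges_of_mem_edges h hu)

lemma ncard_neighborSet_ne_one_of_mem {v : (actionGraph (k + 1)).1}
    (hv : v.1 ∈ (actionGraph k).1) (hroot : v.1 ≠ .root) :
    ((toSimpleGraph (k + 1)).neighborSet v).ncard ≠ 1 := by
  obtain ⟨u, hu⟩ := exists_mem_edges_of_ne_root hv hroot
  have hparent : (u, v.1) ∈ (actionGraph (k + 1)).2 := .inl hu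
  have hchild := mem_edges_succ_node hv
  intro hone
  obtain ⟨x, hx⟩ := Set.ncard_eq_one.1 hone
  have hu' : (⟨u, (mem_of_mem_edges hparent).1⟩ : (actionGraph (k + 1)).1) ∈
      (toSimpleGraph (k + 1)).neighborSet v := toSimpleGraph_adj.2 (.inr hparent)
  have hc' : (⟨_, (mem_of_mem_edges hchild).2⟩ : (actionGraph (k + 1)).1) ∈
      (toSimpleGraph (k + 1)).neighborSet v := toSimpleGraph_adj.2 (.inl hchild)
  rw [hx, Set.mem_singleton_iff] at hu' hc'
  have hlabel : u.label = v.1.label + 1 := congrArg (fun w => w.1.label) (hu'.trans hc'.symm)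
  have := label_lt_of_mem_edges hu
  omega

end actionGraph

/-- The underlying undirected graph of `A k` is a tree (no loops, no multiple edges,
connected, acyclic), and the vertices of `A (k+1)` not in `A k` are precisely the
leaves of `A (k+1)` viewed as a rooted tree with root the vertex labeled 0, i.e. the
non-root vertices of valence 1. -/
theorem stmt_9 (k : ℕ) :
    (∀ v : AGVert, (v, v) ∉ (actionGraph k).2) ∧
    (∀ v w : AGVert, (v, w) ∈ (actionGraph k).2 → (w, v) ∉ (actionGraph k).2) ∧
    (SimpleGraph.fromRel fun a b : (actionGraph k).1 =>
      ((a : AGVert), (b : AGVert)) ∈ (actionGraph k).2).IsTree ∧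
    (∀ v : (actionGraph (k + 1)).1,
      (v : AGVert) ∉ (actionGraph k).1 ↔
        (((SimpleGraph.fromRel fun a b : (actionGraph (k + 1)).1 =>
            ((a : AGVert), (b : AGVert)) ∈ (actionGraph (k + 1)).2).neighborSet
          v).ncard = 1 ∧ (v : AGVert).label ≠ 0)) := by
  refine ⟨fun v h => (actionGraph.label_lt_of_mem_edges h).false,
    fun v w h h' => (actionGraph.label_lt_of_mem_edges h).asymm
      (actionGraph.label_lt_of_mem_edges h'),
    ⟨actionGraph.connected_toSimpleGraph k, actionGraph.isAcyclic_toSimpleGraph k⟩,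
    fun v => ⟨fun hv => ⟨actionGraph.ncard_neighborSet_eq_one_of_not_mem hv, ?_⟩, ?_⟩⟩
  · rw [actionGraph.label_eq_succ_of_not_mem v.2 hv]
    exact k.succ_ne_zero
  · rintro ⟨hone, hlabel⟩ hv
    exact actionGraph.ncard_neighborSet_ne_one_of_mem hv (fun h => hlabel (by rw [h]; rfl)) hone
end
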